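/- arXiv:1803.04155 — 5 statements merged into one kernel-verified Lean document; each statement's English description precedes it below -/
import Mathlib

section
/- For any fixed λ ∈ F_q^×, the expected number of nonzero vectors v with T v = λ v, for T chosen uniformly from GL_n(F_q), equals 1 for every n ≥ 1. -/
/-!
Multiplying by the scalar matrix `λ` is a bijection of `GL n F` that turns the `λ`-eigenvectors
of `T` into the fixed points of `λ⁻¹ T`, so the sum over `T` counts fixed nonzero vectors instead.
Since `GL n F` acts transitively on the nonzero vectors, Burnside's lemma says that this sum is
`|GL n F|` times the number of orbits, which is one.
-/

open Matrix MulAction Finset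

theorem MulAction.sum_card_fixedBy_eq_card_group_of_isPretransitive (G X : Type*) [Group G]
    [MulAction G X] [Fintype G] [∀ g : G, Fintype (fixedBy X g)] [IsPretransitive G X]
    [Nonempty X] :
    ∑ g : G, Fintype.card (fixedBy X g) = Fintype.card G := by
  obtain ⟨_⟩ := (pretransitive_iff_unique_quotient_of_nonempty G X).mp inferInstance
  rw [sum_card_fixedBy_eq_card_orbits_mul_card_group, Fintype.card_unique, one_mul]

theorem LinearEquiv.exists_apply_eq_of_ne_zero {K V : Type*} [DivisionRing K] [AddCommGroup V]
    [Module K V] {u w : V} (hu : u ≠ 0) (hw : w ≠ 0) : ∃ g : V ≃ₗ[K] V, g u = w := by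
  obtain ⟨g, hg⟩ := Submodule.exists_linearEquiv_restrict_eq
    ((toSpanNonzeroSingleton K V u hu).symm ≪≫ₗ toSpanNonzeroSingleton K V w hw)
  refine ⟨g, ?_⟩
  have := hg (toSpanNonzeroSingleton K V u hu 1)
  rw [LinearEquiv.trans_apply, LinearEquiv.symm_apply_apply, toSpanNonzeroSingleton_one,
    toSpanNonzeroSingleton_one] at this
  exact this.symm

namespace Matrix.GeneralLinearGroup

variable {ι K : Type*} [Fintype ι] [DecidableEq ι] [Field K]

theorem exists_smul_eq_of_ne_zero {u w : ι → K} (hu : u ≠ 0) (hw : w ≠ 0) :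
    ∃ A : GL ι K, A • u = w := by
  obtain ⟨g, rfl⟩ := LinearEquiv.exists_apply_eq_of_ne_zero (K := K) hu hw
  refine ⟨toLin.symm (LinearMap.GeneralLinearGroup.ofLinearEquiv g), ?_⟩
  show (toLin.symm (LinearMap.GeneralLinearGroup.ofLinearEquiv g) : Matrix ι ι K) *ᵥ u = g u
  rw [← mulVecLin_apply, ← toLin_apply, MulEquiv.apply_symm_apply]
  rfl

instance : IsPretransitive (GL ι K) {v : ι → K // v ≠ 0} where
  exists_smul_eq u w := by
    obtain ⟨A, hA⟩ := exists_smul_eq_of_ne_zero u.2 w.2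
    exact ⟨A, Subtype.ext hA⟩

variable [Fintype K] [DecidableEq K]

theorem card_fixedBy_nonzero (A : GL ι K) :
    Fintype.card (fixedBy {v : ι → K // v ≠ 0} A) =
      #{v | v ≠ 0 ∧ (A : Matrix ι ι K) *ᵥ v = v} := by
  rw [← Fintype.card_subtype]
  exact Fintype.card_congr <| (Equiv.subtypeEquivRight fun v => by
    rw [mem_fixedBy, Subtype.ext_iff]; rfl).trans (Equiv.subtypeSubtypeEquivSubtypeInter _ _)

theorem card_eigenvectors_scalar_mul (lam : Kˣ) (A : GL ι K) :
    #{v | v ≠ 0 ∧ ((scalar ι lam * A : GL ι K) : Matrix ι ι K) *ᵥ v = (lam : K) • v} =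
      #{v | v ≠ 0 ∧ (A : Matrix ι ι K) *ᵥ v = v} := by
  refine congrArg card (filter_congr fun v _ => and_congr_right fun _ => ?_)
  rw [Units.val_mul, coe_scalar, scalar_apply, ← smul_eq_diagonal_mul, smul_mulVec,
    smul_right_inj lam.ne_zero]

theorem sum_card_eigenvectors [Nonempty ι] (lam : Kˣ) :
    ∑ A : GL ι K, #{v | v ≠ 0 ∧ (A : Matrix ι ι K) *ᵥ v = (lam : K) • v} =
      Fintype.card (GL ι K) := by
  have : Nonempty {v : ι → K // v ≠ 0} := nonempty_subtype.mpr (exists_ne 0)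
  calc ∑ A : GL ι K, #{v | v ≠ 0 ∧ (A : Matrix ι ι K) *ᵥ v = (lam : K) • v}
      = ∑ A : GL ι K, Fintype.card (fixedBy {v : ι → K // v ≠ 0} A) :=
        (Fintype.sum_equiv (Equiv.mulLeft (scalar ι lam)) _ _ fun A => by
          rw [card_fixedBy_nonzero, Equiv.coe_mulLeft, card_eigenvectors_scalar_mul]).symm
    _ = Fintype.card (GL ι K) := sum_card_fixedBy_eq_card_group_of_isPretransitive _ _

end Matrix.GeneralLinearGroup

/-- For any fixed `λ ∈ Fˣ`, the expected number of nonzero `λ`-eigenvectors of a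
uniformly random `T ∈ GL n F` equals `1`, for every `n ≥ 1`. -/
theorem stmt1 (F : Type) [Field F] [Fintype F] [DecidableEq F] (n : ℕ) (hn : 1 ≤ n) (lam : Fˣ) :
    (∑ T : GL (Fin n) F,
        ((Finset.univ.filter (fun v : Fin n → F =>
            v ≠ 0 ∧ (T : Matrix (Fin n) (Fin n) F).mulVec v = (lam : F) • v)).card : ℚ))
      / (Fintype.card (GL (Fin n) F) : ℚ) = 1 := by
  have : Nonempty (Fin n) := ⟨⟨0, hn⟩⟩
  rw [← Nat.cast_sum, GeneralLinearGroup.sum_card_eigenvectors, div_self]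
  exact_mod_cast Fintype.card_ne_zero
end

section
/- Fix d ≤ n and a conjugacy class C ⊆ GL_d(F_q). For T chosen uniformly from GL_n(F_q), the expected number of d-dimensional subspaces W ≤ F_q^n with T(W) = W and T|_W lying in C (after identifying W with F_q^d via any linear isomorphism) equals |C| / |GL_d(F_q)|; in particular this expectation is independent of n for n ≥ d. -/
/-!
Double count the triples `(T, ι, S)` with `ι : F^d → F^n` injective, `S ∈ C` and
`T ∘ ι = ι ∘ S`. For fixed `T`, every admissible subspace `W` is the range of exactly `|GL d F|`
injective maps `ι`, and each of them determines `S`. For fixed `(ι, S)`, since `GL n F` acts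
transitively on injective maps `F^d → F^n`, there are `|GL n F| / #{injective ι}` matrices `T`
with `T ∘ ι = ι ∘ S`. Hence `|GL d F| · ∑_T #{W} = |C| · |GL n F|`.
-/

open Matrix

/-- `T|_W` lies in the conjugacy class `C ⊆ GL d F`: there is a linear isomorphism
`ι : F^d → W ≤ F^n` intertwining some `S ∈ C` with `T`. -/
def restrictsToClass (F : Type) [Field F] {d n : ℕ} (C : ConjClasses (GL (Fin d) F))
    (T : GL (Fin n) F) (W : Submodule F (Fin n → F)) : Prop :=
  ∃ ι : (Fin d → F) →ₗ[F] (Fin n → F), Function.Injective ι ∧ LinearMap.range ι = W ∧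
    ∃ S : GL (Fin d) F, S ∈ C.carrier ∧
      ∀ v : Fin d → F, (T : Matrix (Fin n) (Fin n) F).mulVec (ι v) =
        ι ((S : Matrix (Fin d) (Fin d) F).mulVec v)

open Function

namespace LinearMap

variable {K V W : Type*} [Field K] [AddCommGroup V] [Module K V] [AddCommGroup W] [Module K W]

theorem exists_linearEquiv_comp_eq [FiniteDimensional K V] {ι ι' : V →ₗ[K] W}
    (hι : Injective ι) (hι' : Injective ι') : ∃ g : W ≃ₗ[K] W, g.toLinearMap ∘ₗ ι = ι' := by
  obtain ⟨g, hg⟩ := Submodule.exists_linearEquiv_restrict_eq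
    ((LinearEquiv.ofInjective ι hι).symm.trans (LinearEquiv.ofInjective ι' hι'))
  refine ⟨g, ext fun v => ?_⟩
  simpa using (hg (LinearEquiv.ofInjective ι hι v)).symm

theorem exists_linearEquiv_comp_eq_of_range_eq {ι ι' : V →ₗ[K] W}
    (hι : Injective ι) (hι' : Injective ι') (h : range ι = range ι') :
    ∃ g : V ≃ₗ[K] V, ι ∘ₗ g.toLinearMap = ι' :=
  ⟨(LinearEquiv.ofInjective ι' hι').trans
    ((LinearEquiv.ofEq _ _ h.symm).trans (LinearEquiv.ofInjective ι hι).symm),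
    ext fun v => by simp⟩

theorem card_linearEquiv_comp_eq_of_injective [FiniteDimensional K V] {ι ι₁ ι₂ : V →ₗ[K] W}
    (hι₁ : Injective ι₁) (hι₂ : Injective ι₂) :
    Nat.card {g : W ≃ₗ[K] W // g.toLinearMap ∘ₗ ι = ι₁} =
      Nat.card {g : W ≃ₗ[K] W // g.toLinearMap ∘ₗ ι = ι₂} := by
  obtain ⟨a, ha⟩ := exists_linearEquiv_comp_eq hι₁ hι₂
  have ha' : a.symm.toLinearMap ∘ₗ ι₂ = ι₁ := by rw [← ha]; ext; simp
  exact Nat.card_congr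
    { toFun g := ⟨g.1.trans a, (congrArg (a.toLinearMap ∘ₗ ·) g.2).trans ha⟩
      invFun g := ⟨g.1.trans a.symm, (congrArg (a.symm.toLinearMap ∘ₗ ·) g.2).trans ha'⟩
      left_inv g := by ext; simp
      right_inv g := by ext; simp }

theorem card_injective_mul_card_linearEquiv_comp_eq [Finite V] [Finite W] {ι ι' : V →ₗ[K] W}
    (hι : Injective ι) (hι' : Injective ι') :
    Nat.card {κ : V →ₗ[K] W // Injective κ} *
      Nat.card {g : W ≃ₗ[K] W // g.toLinearMap ∘ₗ ι = ι'} = Nat.card (W ≃ₗ[K] W) := by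
  have : Finite (V →ₗ[K] W) := DFunLike.finite _
  have : Finite (W ≃ₗ[K] W) := Finite.of_injective _ DFunLike.coe_injective
  have := Fintype.ofFinite {κ : V →ₗ[K] W // Injective κ}
  let orbitMap (g : W ≃ₗ[K] W) : {κ : V →ₗ[K] W // Injective κ} :=
    ⟨g.toLinearMap ∘ₗ ι, g.injective.comp hι⟩
  have hfiber (κ : {κ : V →ₗ[K] W // Injective κ}) :
      Nat.card {g // orbitMap g = κ} =
        Nat.card {g : W ≃ₗ[K] W // g.toLinearMap ∘ₗ ι = ι'} := by
    rw [← card_linearEquiv_comp_eq_of_injective κ.2 hι']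
    exact Nat.card_congr (Equiv.subtypeEquivRight fun g => Subtype.ext_iff)
  rw [← Nat.card_congr (Equiv.sigmaFiberEquiv orbitMap), Nat.card_sigma,
    Finset.sum_congr rfl fun κ _ => hfiber κ, Finset.sum_const, Finset.card_univ, smul_eq_mul,
    Nat.card_eq_fintype_card]

theorem card_injective_range_eq [FiniteDimensional K V] [FiniteDimensional K W]
    (U : Submodule K W) (hU : Module.finrank K U = Module.finrank K V) :
    Nat.card {ι : V →ₗ[K] W // Injective ι ∧ range ι = U} = Nat.card (V ≃ₗ[K] V) := by
  let e : U ≃ₗ[K] V := LinearEquiv.ofFinrankEq _ _ hU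
  refine Nat.card_congr
    { toFun ι :=
        (LinearEquiv.ofInjective ι.1 ι.2.1).trans ((LinearEquiv.ofEq _ _ ι.2.2).trans e)
      invFun g := ⟨U.subtype ∘ₗ (g.trans e.symm).toLinearMap,
        U.injective_subtype.comp (g.trans e.symm).injective,
        by rw [range_comp_of_range_eq_top _ (LinearEquiv.range _), Submodule.range_subtype]⟩
      left_inv ι := by ext; simp
      right_inv g := by
        ext v
        rw [LinearEquiv.trans_apply, LinearEquiv.trans_apply, ← e.eq_symm_apply]
        apply Subtype.ext
        simp only [LinearEquiv.coe_ofEq_apply, LinearEquiv.ofInjective_apply]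
        rfl }

end LinearMap

namespace Matrix.GeneralLinearGroup

variable {m K : Type*} [Fintype m] [DecidableEq m] [CommRing K]

def toLinearEquiv : GL m K ≃* ((m → K) ≃ₗ[K] (m → K)) :=
  toLin.trans (LinearMap.GeneralLinearGroup.generalLinearEquiv K (m → K))

@[simp]
theorem toLinearEquiv_apply (A : GL m K) (v : m → K) :
    GeneralLinearGroup.toLinearEquiv A v = (A : Matrix m m K) *ᵥ v :=
  rfl

end Matrix.GeneralLinearGroup

section Intertwines

variable {F : Type} [Field F] {d n : ℕ} {T : GL (Fin n) F} {ι : (Fin d → F) →ₗ[F] (Fin n → F)}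
  {S : GL (Fin d) F}

def Intertwines (T : GL (Fin n) F) (ι : (Fin d → F) →ₗ[F] (Fin n → F)) (S : GL (Fin d) F) :
    Prop :=
  ∀ v, (T : Matrix (Fin n) (Fin n) F) *ᵥ ι v = ι ((S : Matrix (Fin d) (Fin d) F) *ᵥ v)

theorem intertwines_iff :
    Intertwines T ι S ↔ (GeneralLinearGroup.toLinearEquiv T).toLinearMap ∘ₗ ι =
      ι ∘ₗ (GeneralLinearGroup.toLinearEquiv S).toLinearMap := by
  simp [Intertwines, LinearMap.ext_iff]

theorem Intertwines.unique {S' : GL (Fin d) F} (hι : Injective ι) (h : Intertwines T ι S)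
    (h' : Intertwines T ι S') : S = S' :=
  GeneralLinearGroup.toLinearEquiv.injective <|
    LinearEquiv.ext fun v => hι <| by simp [← h v, ← h' v]

theorem Intertwines.comp_conj (h : Intertwines T ι S) (g : GL (Fin d) F) :
    Intertwines T (ι ∘ₗ (GeneralLinearGroup.toLinearEquiv g).toLinearMap) (g⁻¹ * S * g) := by
  have hg : g * (g⁻¹ * S * g) = S * g := by group
  intro v
  simp only [LinearMap.comp_apply, LinearEquiv.coe_coe, GeneralLinearGroup.toLinearEquiv_apply,
    h _, mulVec_mulVec, ← Units.val_mul, hg]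

def invariantSubspacesOfClass (C : ConjClasses (GL (Fin d) F)) (T : GL (Fin n) F) :
    Set (Submodule F (Fin n → F)) :=
  {W | Module.finrank F W = d ∧ (∀ v ∈ W, (T : Matrix (Fin n) (Fin n) F) *ᵥ v ∈ W) ∧
    restrictsToClass F C T W}

theorem range_mem_invariantSubspacesOfClass_iff {C : ConjClasses (GL (Fin d) F)}
    (hι : Injective ι) :
    LinearMap.range ι ∈ invariantSubspacesOfClass C T ↔ ∃ S ∈ C.carrier, Intertwines T ι S := by
  constructor
  · rintro ⟨-, -, ι₀, hι₀, hrange, S₀, hS₀, hint⟩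
    obtain ⟨g, rfl⟩ := LinearMap.exists_linearEquiv_comp_eq_of_range_eq hι₀ hι hrange
    obtain ⟨x, rfl⟩ := GeneralLinearGroup.toLinearEquiv.surjective g
    refine ⟨x⁻¹ * S₀ * x, ?_, Intertwines.comp_conj hint x⟩
    rw [ConjClasses.mem_carrier_iff_mk_eq] at hS₀ ⊢
    rw [← hS₀, ConjClasses.mk_eq_mk_iff_isConj]
    exact isConj_iff.2 ⟨x, by group⟩
  · rintro ⟨S, hS, hint⟩
    refine ⟨?_, ?_, ι, hι, rfl, S, hS, hint⟩
    · rw [LinearMap.finrank_range_of_inj hι, Module.finrank_fin_fun]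
    · rintro - ⟨u, rfl⟩
      exact hint u ▸ LinearMap.mem_range_self _ _

end Intertwines

section Counting

open Finset

variable {F : Type} [Field F] [Fintype F] [DecidableEq F] {d n : ℕ}

noncomputable instance : Fintype ((Fin d → F) →ₗ[F] (Fin n → F)) :=
  @Fintype.ofFinite _ (DFunLike.finite _)

open scoped Classical in
theorem card_intertwines_eq_ite {C : ConjClasses (GL (Fin d) F)} {T : GL (Fin n) F}
    {ι : (Fin d → F) →ₗ[F] (Fin n → F)} (hι : Injective ι) :
    #{S ∈ C.carrier.toFinset | Intertwines T ι S} =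
      if LinearMap.range ι ∈ invariantSubspacesOfClass C T then 1 else 0 := by
  split_ifs with h
  · obtain ⟨S, hSC, hS⟩ := (range_mem_invariantSubspacesOfClass_iff hι).1 h
    refine card_eq_one.2 ⟨S, eq_singleton_iff_unique_mem.2 ⟨by simp [hSC, hS], ?_⟩⟩
    intro S' hS'
    exact (mem_filter.1 hS').2.unique hι hS
  · refine card_eq_zero.2 (filter_eq_empty_iff.2 fun S hSC hS => h ?_)
    exact (range_mem_invariantSubspacesOfClass_iff hι).2 ⟨S, by simpa using hSC, hS⟩

open scoped Classical in
theorem card_gl_mul_ncard_invariantSubspacesOfClass (C : ConjClasses (GL (Fin d) F))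
    (T : GL (Fin n) F) :
    Fintype.card (GL (Fin d) F) * (invariantSubspacesOfClass C T).ncard =
      ∑ ι ∈ {ι : (Fin d → F) →ₗ[F] (Fin n → F) | Injective ι},
        #{S ∈ C.carrier.toFinset | Intertwines T ι S} := by
  set P := invariantSubspacesOfClass C T
  have hfin : P.Finite := P.toFinite
  have hfiber (U : Submodule F (Fin n → F)) (hU : U ∈ hfin.toFinset) :
      #{ι ∈ {ι : (Fin d → F) →ₗ[F] (Fin n → F) | Injective ι ∧ LinearMap.range ι ∈ P} |
        LinearMap.range ι = U} = Fintype.card (GL (Fin d) F) := by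
    rw [Set.Finite.mem_toFinset] at hU
    rw [filter_filter, filter_congr fun ι _ => and_congr_left fun h : LinearMap.range ι = U =>
      and_iff_left (h ▸ hU), ← Fintype.card_subtype, ← Nat.card_eq_fintype_card,
      ← Nat.card_eq_fintype_card, LinearMap.card_injective_range_eq U (by simpa using hU.1),
      Nat.card_congr GeneralLinearGroup.toLinearEquiv.toEquiv]
  rw [sum_congr rfl fun ι hι => card_intertwines_eq_ite (mem_filter.1 hι).2, sum_boole,
    Nat.cast_id, filter_filter, card_eq_sum_card_fiberwise (t := hfin.toFinset) ?_,
    sum_const_nat hfiber, Set.ncard_eq_toFinset_card _ hfin, mul_comm]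
  intro ι hι
  simpa using (mem_filter.1 hι).2.2

open scoped Classical in
theorem sum_card_intertwines_eq_card (hdn : d ≤ n) (S : GL (Fin d) F) :
    ∑ ι ∈ {ι : (Fin d → F) →ₗ[F] (Fin n → F) | Injective ι}, #{T | Intertwines T ι S} =
      Fintype.card (GL (Fin n) F) := by
  have hcard (ι : (Fin d → F) →ₗ[F] (Fin n → F)) (hι : Injective ι) :
      #{ι : (Fin d → F) →ₗ[F] (Fin n → F) | Injective ι} * #{T | Intertwines T ι S} =
        Fintype.card (GL (Fin n) F) := by
    have hS : Injective (ι ∘ₗ (GeneralLinearGroup.toLinearEquiv S).toLinearMap) :=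
      hι.comp (GeneralLinearGroup.toLinearEquiv S).injective
    have hT : Nat.card {T // Intertwines T ι S} =
        Nat.card {g : (Fin n → F) ≃ₗ[F] (Fin n → F) //
          g.toLinearMap ∘ₗ ι = ι ∘ₗ (GeneralLinearGroup.toLinearEquiv S).toLinearMap} :=
      Nat.card_congr
        (GeneralLinearGroup.toLinearEquiv.toEquiv.subtypeEquiv fun _ => intertwines_iff)
    rw [← Fintype.card_subtype, ← Fintype.card_subtype, ← Nat.card_eq_fintype_card,
      ← Nat.card_eq_fintype_card, ← Nat.card_eq_fintype_card, hT,
      LinearMap.card_injective_mul_card_linearEquiv_comp_eq hι hS,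
      Nat.card_congr GeneralLinearGroup.toLinearEquiv.toEquiv]
  have hpos : 0 < #{ι : (Fin d → F) →ₗ[F] (Fin n → F) | Injective ι} :=
    card_pos.2 ⟨Function.ExtendByZero.linearMap F (Fin.castLE hdn),
      mem_filter.2 ⟨mem_univ _, Function.extend_injective (Fin.castLE_injective hdn) 0⟩⟩
  refine Nat.eq_of_mul_eq_mul_left hpos ?_
  rw [mul_sum, sum_congr rfl fun ι hι => hcard ι (mem_filter.1 hι).2, sum_const, smul_eq_mul]

open scoped Classical in
theorem card_gl_mul_sum_ncard_invariantSubspacesOfClass (hdn : d ≤ n)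
    (C : ConjClasses (GL (Fin d) F)) :
    Fintype.card (GL (Fin d) F) * ∑ T : GL (Fin n) F, (invariantSubspacesOfClass C T).ncard =
      C.carrier.ncard * Fintype.card (GL (Fin n) F) := by
  calc Fintype.card (GL (Fin d) F) * ∑ T : GL (Fin n) F, (invariantSubspacesOfClass C T).ncard
      = ∑ T : GL (Fin n) F, ∑ ι ∈ {ι : (Fin d → F) →ₗ[F] (Fin n → F) | Injective ι},
          ∑ S ∈ C.carrier.toFinset, if Intertwines T ι S then 1 else 0 := by
        simp_rw [mul_sum, card_gl_mul_ncard_invariantSubspacesOfClass, card_filter]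
    _ = ∑ S ∈ C.carrier.toFinset, ∑ ι ∈ {ι : (Fin d → F) →ₗ[F] (Fin n → F) | Injective ι},
          #{T | Intertwines T ι S} := by
        simp_rw [card_filter]
        rw [sum_comm]
        exact (sum_congr rfl fun ι _ => sum_comm).trans sum_comm
    _ = C.carrier.ncard * Fintype.card (GL (Fin n) F) := by
        rw [sum_congr rfl fun S _ => sum_card_intertwines_eq_card hdn S, sum_const, smul_eq_mul,
          Set.ncard_eq_toFinset_card']

end Counting

/-- For a conjugacy class `C ⊆ GL d F` and `n ≥ d`, the expected number over uniform
`T ∈ GL n F` of `d`-dimensional `T`-invariant subspaces `W ≤ F^n` with `T|_W ∈ C`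
equals `|C| / |GL d F|`; in particular it is independent of `n`. -/
theorem stmt2 (F : Type) [Field F] [Fintype F] [DecidableEq F] (d n : ℕ) (hdn : d ≤ n)
    (C : ConjClasses (GL (Fin d) F)) :
    (∑ T : GL (Fin n) F,
        (Set.ncard {W : Submodule F (Fin n → F) |
            Module.finrank F W = d ∧
            (∀ v ∈ W, (T : Matrix (Fin n) (Fin n) F).mulVec v ∈ W) ∧
            restrictsToClass F C T W} : ℚ))
      / (Fintype.card (GL (Fin n) F) : ℚ)
    = (C.carrier.ncard : ℚ) / (Fintype.card (GL (Fin d) F) : ℚ) := by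
  rw [div_eq_div_iff (by exact_mod_cast Fintype.card_ne_zero)
    (by exact_mod_cast Fintype.card_ne_zero), mul_comm]
  exact_mod_cast card_gl_mul_sum_ncard_invariantSubspacesOfClass hdn C
end

section
/- Fix d ≤ n and a conjugacy class C ⊆ S_d. For a uniformly random τ ∈ S_n, the expected number of subsets W ⊆ {1,…,n} of cardinality d such that τ(W) = W and the restriction τ|_W lies in C (under any bijection W ≅ {1,…,d}) equals |C| / d!; in particular it is independent of n for n ≥ d. -/
/-!
Double counting: summing over `τ` the number of admissible `W` is the same as summing, over the
`C(n, d)` sets `W` of size `d`, the number of `τ` that stabilise `W` and act on it in the class `C`.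
Such `τ` correspond to pairs `(ρ, π)` of a permutation `ρ` of `W` whose transport to `Fin d` lies
in `C` (the transport depends on the bijection `Fin d ≃ W` only up to conjugation) and an arbitrary
permutation `π` of the complement, so there are `|C| (n - d)!` of them. The expectation is
therefore `C(n, d) |C| (n - d)! / n! = |C| / d!`.
-/

open Finset Nat

namespace Equiv

variable {α β : Type*}

theorem symm_permCongr_eq_iff (e : α ≃ β) (ρ : Perm β) (σ : Perm α) :
    e.symm.permCongr ρ = σ ↔ ∀ i, ρ (e i) = e (σ i) := by
  simp only [Equiv.ext_iff, permCongr_apply, symm_symm, symm_apply_eq]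

theorem isConj_symm_permCongr (e e' : α ≃ β) (ρ : Perm β) :
    IsConj (e.symm.permCongr ρ) (e'.symm.permCongr ρ) :=
  isConj_iff.mpr ⟨e.trans e'.symm, by ext; simp⟩

namespace Perm

theorem apply_mem_iff_of_forall_apply_mem (τ : Perm α) {W : Finset α}
    (h : ∀ i ∈ W, τ i ∈ W) (x : α) : τ x ∈ W ↔ x ∈ W := by
  have hW : W.map τ.toEmbedding = W :=
    map_eq_of_subset fun y hy => by
      obtain ⟨z, hz, rfl⟩ := mem_map.mp hy
      exact h z hz
  conv_lhs => rw [← hW]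
  exact mem_map' _

theorem subtypeCongr_subtypePerm {p : α → Prop} [DecidablePred p] (τ : Perm α)
    (h : ∀ x, p (τ x) ↔ p x) :
    (τ.subtypePerm h).subtypeCongr (τ.subtypePerm fun x => not_congr (h x)) = τ := by
  ext x
  by_cases hx : p x
  · simp [subtypeCongr.left_apply _ _ hx]
  · simp [subtypeCongr.right_apply _ _ hx]

def RestrictsToClass {d : ℕ} (C : ConjClasses (Perm (Fin d))) (τ : Perm α) (W : Finset α) :
    Prop :=
  (∀ i ∈ W, τ i ∈ W) ∧ ∃ β : Fin d ≃ {x // x ∈ W}, ∃ σ : Perm (Fin d), σ ∈ C.carrier ∧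
    ∀ i : Fin d, τ (β i : α) = (β (σ i) : α)

variable {d : ℕ} {C : ConjClasses (Perm (Fin d))} {W : Finset α}

theorem RestrictsToClass.exists_symm_permCongr_subtypePerm_mem {τ : Perm α}
    (hτ : RestrictsToClass C τ W) (β₀ : Fin d ≃ {x // x ∈ W}) :
    ∃ h : ∀ x, τ x ∈ W ↔ x ∈ W, β₀.symm.permCongr (τ.subtypePerm h) ∈ C.carrier := by
  obtain ⟨hW, β, σ, hσ, hβ⟩ := hτ
  have h := apply_mem_iff_of_forall_apply_mem τ hW
  have hσ_eq : β.symm.permCongr (τ.subtypePerm h) = σ :=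
    (symm_permCongr_eq_iff β _ σ).mpr fun i => Subtype.ext (hβ i)
  refine ⟨h, ?_⟩
  rw [ConjClasses.mem_carrier_iff_mk_eq] at hσ ⊢
  rw [← hσ, ← hσ_eq, ConjClasses.mk_eq_mk_iff_isConj]
  exact isConj_symm_permCongr _ _ _

theorem restrictsToClass_subtypeCongr [DecidablePred (· ∈ W)] (β₀ : Fin d ≃ {x // x ∈ W})
    {ρ : Perm {x // x ∈ W}} (hρ : β₀.symm.permCongr ρ ∈ C.carrier) (π : Perm {x // x ∉ W}) :
    RestrictsToClass C (ρ.subtypeCongr π) W := by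
  refine ⟨fun i hi => by simp [subtypeCongr.left_apply _ _ hi], β₀, _, hρ, fun i => ?_⟩
  rw [subtypeCongr.left_apply_subtype, (symm_permCongr_eq_iff β₀ ρ _).mp rfl i]

end Perm
end Equiv

open Equiv Perm

variable {α : Type*} [Fintype α] {d : ℕ} {C : ConjClasses (Perm (Fin d))}

theorem ncard_restrictsToClass {W : Finset α} (hW : #W = d) :
    {τ : Perm α | RestrictsToClass C τ W}.ncard = C.carrier.ncard * (Fintype.card α - d)! := by
  classical
  obtain β₀ : Fin d ≃ {x // x ∈ W} := (Fintype.equivFinOfCardEq (by simp [hW])).symm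
  have hset : {τ : Perm α | RestrictsToClass C τ W} =
      subtypeCongrHom (· ∈ W) '' ({ρ | β₀.symm.permCongr ρ ∈ C.carrier} ×ˢ Set.univ) := by
    ext τ
    constructor
    · intro hτ
      obtain ⟨h, hC⟩ := hτ.exists_symm_permCongr_subtypePerm_mem β₀
      exact ⟨(τ.subtypePerm h, τ.subtypePerm fun x => not_congr (h x)), ⟨hC, trivial⟩,
        subtypeCongr_subtypePerm τ h⟩
    · rintro ⟨⟨ρ, π⟩, ⟨hρ, -⟩, rfl⟩
      exact restrictsToClass_subtypeCongr β₀ hρ π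
  have hclass : {ρ | β₀.symm.permCongr ρ ∈ C.carrier}.ncard = C.carrier.ncard :=
    Set.ncard_preimage_of_injective_subset_range (β₀.symm.permCongr).injective (by simp)
  rw [hset, Set.ncard_image_of_injective _ (subtypeCongrHom_injective _), Set.ncard_prod, hclass,
    Set.ncard_univ, Nat.card_perm, Nat.card_eq_fintype_card, Fintype.card_subtype_compl,
    Fintype.card_coe, hW]

theorem sum_ncard_restrictsToClass [DecidableEq α] :
    ∑ τ : Perm α, {W : Finset α | #W = d ∧ RestrictsToClass C τ W}.ncard =
      (Fintype.card α).choose d * (C.carrier.ncard * (Fintype.card α - d)!) := by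
  classical
  calc ∑ τ : Perm α, {W : Finset α | #W = d ∧ RestrictsToClass C τ W}.ncard
      = ∑ τ : Perm α, #((powersetCard d univ).bipartiteAbove (RestrictsToClass C) τ) := by
        refine sum_congr rfl fun τ _ => ?_
        rw [← Set.ncard_coe_finset]
        congr
        ext W
        simp [bipartiteAbove, mem_powersetCard]
    _ = ∑ W ∈ powersetCard d univ, #(univ.bipartiteBelow (RestrictsToClass C) W) :=
        sum_card_bipartiteAbove_eq_sum_card_bipartiteBelow _
    _ = ∑ W ∈ powersetCard d univ, C.carrier.ncard * (Fintype.card α - d)! := by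
        refine sum_congr rfl fun W hW => ?_
        rw [← ncard_restrictsToClass (mem_powersetCard.mp hW).2, ← Set.ncard_coe_finset]
        simp [bipartiteBelow]
    _ = (Fintype.card α).choose d * (C.carrier.ncard * (Fintype.card α - d)!) := by
        rw [sum_const, card_powersetCard, Finset.card_univ, smul_eq_mul]

/-- For a conjugacy class `C ⊆ S_d` and `n ≥ d`, the expected number over uniform
`τ ∈ S_n` of `d`-element subsets `W ⊆ {1,…,n}` with `τ(W) = W` and `τ|_W ∈ C`
equals `|C| / d!`; in particular it is independent of `n`. -/
theorem stmt4 (d n : ℕ) (hdn : d ≤ n) (C : ConjClasses (Equiv.Perm (Fin d))) :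
    (∑ τ : Equiv.Perm (Fin n),
        (Set.ncard {W : Finset (Fin n) | W.card = d ∧ (∀ i ∈ W, τ i ∈ W) ∧
            ∃ β : Fin d ≃ {x // x ∈ W}, ∃ σ : Equiv.Perm (Fin d), σ ∈ C.carrier ∧
              ∀ i : Fin d, τ (β i : Fin n) = (β (σ i) : Fin n)} : ℚ))
      / (Fintype.card (Equiv.Perm (Fin n)) : ℚ)
    = (C.carrier.ncard : ℚ) / (Nat.factorial d : ℚ) := by
  have hsum := sum_ncard_restrictsToClass (α := Fin n) (d := d) (C := C)
  rw [Fintype.card_fin] at hsum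
  calc _ = ((n.choose d * (C.carrier.ncard * (n - d)!) : ℕ) : ℚ) / n ! := by
        rw [← hsum, Nat.cast_sum, Fintype.card_perm, Fintype.card_fin]
        rfl
    _ = C.carrier.ncard / d ! := by
        push_cast
        rw [Nat.cast_choose ℚ hdn]
        field_simp
end

section
/- For λ ∈ F_q^×, the square of the class function X_{(λ)} satisfies X_{(λ)}^2 = X_{(λ)} + (q+1)q · X_{λ·I_2} as functions on GL_n(F_q) for every n ≥ 2, where X_{λ·I_2}(T) counts 2-dimensional T-invariant subspaces W with T|_W = λ·id_W. -/
open Matrix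

section Aux

open Module Finset

open scoped Classical

variable {F V : Type*} [Field F] [Fintype F] [AddCommGroup V] [Module F V] [Fintype V]

instance : Finite (Submodule F V) :=
  Finite.of_injective (fun p : Submodule F V => (p : Set V)) SetLike.coe_injective

noncomputable instance : Fintype (Submodule F V) := Fintype.ofFinite _

lemma span_eq_line {L : Submodule F V} (hL : Module.finrank F L = 1) {v : V}
    (hv : v ∈ L) (hv0 : v ≠ 0) : Submodule.span F {v} = L := by
  have := Module.finite_of_finite F (M := V)
  refine Submodule.eq_of_le_of_finrank_eq ?_ ?_
  · rwa [Submodule.span_le, Set.singleton_subset_iff]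
  · rw [finrank_span_singleton hv0, hL]

lemma sup_of_ne_lines {L L' : Submodule F V} (hL : Module.finrank F L = 1)
    (hL' : Module.finrank F L' = 1) (hne : L ≠ L') :
    Module.finrank F ↥(L ⊔ L') = 2 := by
  have := Module.finite_of_finite F (M := V)
  have h := Submodule.finrank_sup_add_finrank_inf_eq L L'
  have hlt : L ⊓ L' < L := by
    refine lt_of_le_of_ne inf_le_left (fun h => hne ?_)
    have hle : L ≤ L' := by rw [← h]; exact inf_le_right
    exact Submodule.eq_of_le_of_finrank_eq hle (by rw [hL, hL'])
  have h0 : Module.finrank F ↥(L ⊓ L') = 0 := by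
    have := Submodule.finrank_lt_finrank_of_lt hlt
    omega
  omega

lemma lines_in_plane (W : Submodule F V) (hW : Module.finrank F W = 2) :
    (univ.filter fun L : Submodule F V => Module.finrank F L = 1 ∧ L ≤ W).card
      = Fintype.card F + 1 := by
  have := Module.finite_of_finite F (M := V)
  set q := Fintype.card F with hq
  have hq2 : 2 ≤ q := Fintype.one_lt_card
  set t := univ.filter fun L : Submodule F V => Module.finrank F L = 1 ∧ L ≤ W with ht
  set s := (univ : Finset W).filter (fun v => v ≠ 0) with hs
  have hscard : s.card = q ^ 2 - 1 := by
    rw [hs, filter_ne' univ 0, card_erase_of_mem (mem_univ 0), card_univ,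
      card_eq_pow_finrank (K := F) (V := W), hW]
  have hmaps : ∀ v ∈ s, Submodule.span F {(v : V)} ∈ t := by
    intro v hv
    have hv0 : (v : V) ≠ 0 := by
      simpa [Submodule.coe_eq_zero] using (mem_filter.1 hv).2
    refine mem_filter.2 ⟨mem_univ _, finrank_span_singleton hv0, ?_⟩
    rw [Submodule.span_le, Set.singleton_subset_iff]; exact v.2
  have hfib : ∀ L ∈ t, (s.filter fun v : W => Submodule.span F {(v : V)} = L).card = q - 1 := by
    intro L hL
    obtain ⟨-, hL1, hLW⟩ := mem_filter.1 hL
    have : (s.filter fun v : W => Submodule.span F {(v : V)} = L).card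
        = ((univ : Finset L).filter (fun u => u ≠ 0)).card := by
      refine Finset.card_bij' (fun v hv => ⟨(v : V), ?_⟩) (fun u hu => ⟨(u : V), hLW u.2⟩)
        ?_ ?_ ?_ ?_
      · obtain ⟨hv, hsp⟩ := mem_filter.1 hv
        rw [← hsp]; exact Submodule.mem_span_singleton_self _
      · intro v hv
        obtain ⟨hv, hsp⟩ := mem_filter.1 hv
        have hv0 : (v : V) ≠ 0 := by
          simpa [Submodule.coe_eq_zero] using (mem_filter.1 hv).2
        exact mem_filter.2 ⟨mem_univ _, by simpa [Submodule.coe_eq_zero] using hv0⟩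
      · intro u hu
        have hu0 : (u : V) ≠ 0 := by
          simpa [Submodule.coe_eq_zero] using (mem_filter.1 hu).2
        refine mem_filter.2 ⟨mem_filter.2 ⟨mem_univ _, by simpa [Submodule.coe_eq_zero] using hu0⟩, ?_⟩
        exact span_eq_line hL1 u.2 hu0
      · intro v hv; rfl
      · intro u hu; rfl
    rw [this, filter_ne' univ 0, card_erase_of_mem (mem_univ 0), card_univ,
      card_eq_pow_finrank (K := F) (V := L), hL1, pow_one]
  have hsum := card_eq_sum_card_fiberwise hmaps
  rw [hscard, Finset.sum_congr rfl hfib, Finset.sum_const, smul_eq_mul] at hsum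
  have hkey : t.card * (q - 1) = (q + 1) * (q - 1) := by
    rw [← hsum]
    obtain ⟨k, hk⟩ := Nat.exists_eq_add_of_le hq2
    rw [hk]
    have h2 : 2 + k - 1 = k + 1 := by omega
    have h3 : (2 + k) ^ 2 = (2 + k + 1) * (k + 1) + 1 := by ring
    rw [h2, h3]
    simp
  exact Nat.eq_of_mul_eq_mul_right (by omega) hkey

lemma key_count (E : Submodule F V) :
    (univ.filter fun L : Submodule F V => Module.finrank F L = 1 ∧ L ≤ E).card ^ 2
      = (univ.filter fun L : Submodule F V => Module.finrank F L = 1 ∧ L ≤ E).card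
        + (Fintype.card F + 1) * Fintype.card F *
          (univ.filter fun W : Submodule F V => Module.finrank F W = 2 ∧ W ≤ E).card := by
  have := Module.finite_of_finite F (M := V)
  set q := Fintype.card F with hq
  set P1 := univ.filter fun L : Submodule F V => Module.finrank F L = 1 ∧ L ≤ E with hP1
  set P2 := univ.filter fun W : Submodule F V => Module.finrank F W = 2 ∧ W ≤ E with hP2
  set Pr := P1 ×ˢ P1 with hPr
  have hsplit := Finset.card_filter_add_card_filter_not
    (s := Pr) (p := fun p => p.1 = p.2)
  have hdiag : (Pr.filter fun p => p.1 = p.2).card = P1.card := by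
    refine Finset.card_bij (fun p _ => p.1) ?_ ?_ ?_
    · intro p hp
      exact (Finset.mem_product.1 (Finset.mem_filter.1 hp).1).1
    · intro p hp p' hp' h
      have h' : p.1 = p'.1 := h
      have h1 : p.1 = p.2 := (Finset.mem_filter.1 hp).2
      have h2 : p'.1 = p'.2 := (Finset.mem_filter.1 hp').2
      exact Prod.ext h' (by rw [← h1, ← h2, h'])
    · intro L hL
      exact ⟨(L, L), Finset.mem_filter.2 ⟨Finset.mem_product.2 ⟨hL, hL⟩, rfl⟩, rfl⟩
  have hmaps : ∀ p ∈ Pr.filter (fun p => ¬ p.1 = p.2), p.1 ⊔ p.2 ∈ P2 := by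
    intro p hp
    obtain ⟨hpr, hne⟩ := Finset.mem_filter.1 hp
    obtain ⟨h1, h2⟩ := Finset.mem_product.1 hpr
    obtain ⟨-, h11, h1E⟩ := Finset.mem_filter.1 h1
    obtain ⟨-, h21, h2E⟩ := Finset.mem_filter.1 h2
    exact Finset.mem_filter.2 ⟨mem_univ _, sup_of_ne_lines h11 h21 hne, sup_le h1E h2E⟩
  have hfib : ∀ W ∈ P2,
      ((Pr.filter (fun p => ¬ p.1 = p.2)).filter fun p => p.1 ⊔ p.2 = W).card
        = (q + 1) * q := by
    intro W hW
    obtain ⟨-, hW2, hWE⟩ := Finset.mem_filter.1 hW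
    have heq : ((Pr.filter (fun p => ¬ p.1 = p.2)).filter fun p => p.1 ⊔ p.2 = W)
        = (univ.filter fun L : Submodule F V => Module.finrank F L = 1 ∧ L ≤ W).offDiag := by
      ext p
      constructor
      · intro hp
        obtain ⟨hp', hsup⟩ := Finset.mem_filter.1 hp
        obtain ⟨hpr, hne⟩ := Finset.mem_filter.1 hp'
        obtain ⟨h1, h2⟩ := Finset.mem_product.1 hpr
        obtain ⟨-, h11, -⟩ := Finset.mem_filter.1 h1
        obtain ⟨-, h21, -⟩ := Finset.mem_filter.1 h2
        refine Finset.mem_offDiag.2 ⟨?_, ?_, hne⟩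
        · exact Finset.mem_filter.2 ⟨mem_univ _, h11, le_sup_left.trans hsup.le⟩
        · exact Finset.mem_filter.2 ⟨mem_univ _, h21, le_sup_right.trans hsup.le⟩
      · intro hp
        obtain ⟨hm1, hm2, hne⟩ := Finset.mem_offDiag.1 hp
        obtain ⟨-, h11, h1W⟩ := Finset.mem_filter.1 hm1
        obtain ⟨-, h21, h2W⟩ := Finset.mem_filter.1 hm2
        refine Finset.mem_filter.2 ⟨Finset.mem_filter.2 ⟨Finset.mem_product.2 ⟨?_, ?_⟩, hne⟩, ?_⟩
        · exact Finset.mem_filter.2 ⟨mem_univ _, h11, h1W.trans hWE⟩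
        · exact Finset.mem_filter.2 ⟨mem_univ _, h21, h2W.trans hWE⟩
        · refine Submodule.eq_of_le_of_finrank_eq (sup_le h1W h2W) ?_
          rw [sup_of_ne_lines h11 h21 hne, hW2]
    rw [heq, Finset.offDiag_card, lines_in_plane W hW2]
    have h3 : (q+1) * (q+1) = (q+1) * q + (q+1) := by ring
    rw [h3, hq]
    simp
  have hoff := card_eq_sum_card_fiberwise hmaps
  rw [Finset.sum_congr rfl hfib, Finset.sum_const, smul_eq_mul] at hoff
  have hPrcard : Pr.card = P1.card ^ 2 := by rw [hPr, Finset.card_product, sq]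
  rw [hdiag, hoff, hPrcard] at hsplit
  rw [← hsplit]
  ring

end Aux

/-- `X_{(λ)}(T)`: the number of lines `L ≤ F^n` with `T(L) = L` on which `T` acts
by the scalar `λ`. -/
noncomputable def eigenLineCount (F : Type) [Field F] {n : ℕ} (lam : F) (T : GL (Fin n) F) : ℕ :=
  Set.ncard {L : Submodule F (Fin n → F) | Module.finrank F L = 1 ∧
    ∀ v ∈ L, (T : Matrix (Fin n) (Fin n) F).mulVec v = lam • v}

open scoped Classical in
/-- For `λ ∈ Fˣ` and `q = |F|`, the identity
`X_{(λ)}² = X_{(λ)} + (q+1)·q · X_{λ·I₂}` holds pointwise on `GL n F` for `n ≥ 2`,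
where `X_{λ·I₂}(T)` counts the `2`-dimensional subspaces `W` with `T|_W = λ·id`. -/
theorem stmt11 (F : Type) [Field F] [Fintype F] [DecidableEq F] (n : ℕ) (hn : 2 ≤ n)
    (lam : Fˣ) (T : GL (Fin n) F) :
    eigenLineCount F (lam : F) T ^ 2
      = eigenLineCount F (lam : F) T
        + (Fintype.card F + 1) * Fintype.card F *
          Set.ncard {W : Submodule F (Fin n → F) | Module.finrank F W = 2 ∧
            ∀ v ∈ W, (T : Matrix (Fin n) (Fin n) F).mulVec v = (lam : F) • v} := by
  set E : Submodule F (Fin n → F) :=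
    LinearMap.ker ((T : Matrix (Fin n) (Fin n) F).mulVecLin - (lam : F) • LinearMap.id) with hE
  have hmem : ∀ v, v ∈ E ↔ (T : Matrix (Fin n) (Fin n) F).mulVec v = (lam : F) • v := by
    intro v
    simp [hE, LinearMap.mem_ker, sub_eq_zero, Matrix.mulVecLin_apply]
  have hcond : ∀ L : Submodule F (Fin n → F),
      (∀ v ∈ L, (T : Matrix (Fin n) (Fin n) F).mulVec v = (lam : F) • v) ↔ L ≤ E := by
    intro L
    constructor
    · intro h v hv; exact (hmem v).2 (h v hv)
    · intro h v hv; exact (hmem v).1 (h hv)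
  have h1 : eigenLineCount F (lam : F) T
      = (Finset.univ.filter fun L : Submodule F (Fin n → F) =>
          Module.finrank F L = 1 ∧ L ≤ E).card := by
    rw [eigenLineCount, ← Set.ncard_coe_finset]
    congr 1
    ext L
    simp only [Set.mem_setOf_eq, Finset.coe_filter, Finset.mem_univ, true_and, hcond L]
  have h2 : Set.ncard {W : Submodule F (Fin n → F) | Module.finrank F W = 2 ∧
        ∀ v ∈ W, (T : Matrix (Fin n) (Fin n) F).mulVec v = (lam : F) • v}
      = (Finset.univ.filter fun W : Submodule F (Fin n → F) =>
          Module.finrank F W = 2 ∧ W ≤ E).card := by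
    rw [← Set.ncard_coe_finset]
    congr 1
    ext W
    simp only [Set.mem_setOf_eq, Finset.coe_filter, Finset.mem_univ, true_and, hcond W]
  rw [h1, h2]
  exact key_count E
end

section
/- Fix conjugacy classes C_1 ⊆ GL_1(F_q) given by scalars λ ≠ μ. For uniform T ∈ GL_n(F_q) with n ≥ 2, the expected value of X_{(λ)}(T)·X_{(μ)}(T) equals |D|/|GL_2(F_q)| where D is the conjugacy class of diag(λ,μ) in GL_2(F_q); explicitly this expectation equals q(q+1)/((q²−1)(q²−q)) = 1/(q−1)². -/
/-!
Multiplied by `(q - 1)²`, `X_λ(T) X_μ(T)` counts the pairs `(v, w)` of eigenvectors of `T` for `λ`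
and `μ`. These are exactly the linearly independent pairs, which form a single orbit of `GL_n`, and
for each such pair the admissible `T` form a coset of its stabilizer; so summing over `T` gives
`|orbit| · |stabilizer| = |GL_n|`. On the other side, the centralizer of `diag(λ, μ)` in `GL_2` is
the diagonal torus, of order `(q - 1)²`, so `|D| / |GL_2|` is `1 / (q - 1)²` as well.
-/

open Matrix

open Finset MulAction Function

namespace MulAction
variable {G α : Type*} [Group G] [MulAction G α]

theorem card_smul_eq_of_mem_orbit [Fintype G] [DecidableEq α] {x p q : α}
    (hp : p ∈ orbit G x) (hq : q ∈ orbit G x) :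
    #{g : G | g • p = q} = Nat.card (stabilizer G x) := by
  obtain ⟨a, rfl⟩ := hp
  obtain ⟨b, rfl⟩ := hq
  rw [← Fintype.card_subtype, ← Nat.card_eq_fintype_card]
  refine Nat.card_congr
    { toFun g := ⟨b⁻¹ * g * a, ?_⟩
      invFun g := ⟨b * g * a⁻¹, ?_⟩
      left_inv g := by ext; simp [mul_assoc]
      right_inv g := by ext; simp [mul_assoc] }
  · rw [mem_stabilizer_iff, mul_smul, mul_smul, g.2, inv_smul_smul]
  · rw [mul_smul, mul_smul, inv_smul_smul, g.2]

/-- Over each point `p` of the orbit, the `g` with `g • p = σ p` form a coset of a stabilizer. -/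
theorem sum_card_filter_smul_eq_card [Fintype G] [Fintype α] [DecidableEq α] (x : α)
    (P : α → Prop) [DecidablePred P] (σ : α → α)
    (h : ∀ p, p ∈ orbit G x ↔ P p ∧ ∃ g : G, g • p = σ p) :
    ∑ g : G, #{p | P p ∧ g • p = σ p} = Fintype.card G := by
  classical
  have hfiber (p : α) : #{g : G | P p ∧ g • p = σ p} =
      if p ∈ orbit G x then Nat.card (stabilizer G x) else 0 := by
    split_ifs with hp
    · obtain ⟨hP, g, hg⟩ := (h p).1 hp
      simp only [hP, true_and]
      exact card_smul_eq_of_mem_orbit hp (hg ▸ mem_orbit_of_mem_orbit g hp)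
    · rw [card_eq_zero, filter_eq_empty_iff]
      exact fun g _ hg => hp ((h p).2 ⟨hg.1, g, hg.2⟩)
  simp only [card_eq_sum_ones, sum_filter]
  rw [sum_comm]
  simp only [← sum_filter, ← card_eq_sum_ones, hfiber]
  rw [sum_const, smul_eq_mul, Set.filter_mem_univ_eq_toFinset, ← Nat.card_eq_card_toFinset,
    Nat.card_coe_set_eq, ← index_stabilizer, mul_comm, Subgroup.card_mul_index,
    Nat.card_eq_fintype_card]

end MulAction

namespace Submodule
variable {F V : Type*} [Field F] [AddCommGroup V] [Module F V]

theorem ncard_finrank_eq_one_le_mul [Finite F] (W : Submodule F V) :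
    {L : Submodule F V | Module.finrank F L = 1 ∧ L ≤ W}.ncard * (Nat.card F - 1) =
      ((W : Set V) \ {0}).ncard := by
  have e : Projectivization F W ≃ {L : Submodule F V | Module.finrank F L = 1 ∧ L ≤ W} :=
    (Projectivization.equivSubmodule F W).trans <|
      ((MapSubtype.orderIso W).toEquiv.subtypeEquiv
        (q := fun L : {L // L ≤ W} => Module.finrank F L.1 = 1) fun L =>
          (congrArg (· = 1) (finrank_map_subtype_eq W L)).to_iff.symm).trans
      { toFun L := ⟨L.1.1, L.2, L.1.2⟩
        invFun L := ⟨⟨L.1, L.2.2⟩, L.2.1⟩ }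
  rw [Set.ncard_sdiff_singleton_of_mem W.zero_mem, ← Nat.card_coe_set_eq, ← Nat.card_congr e]
  exact (Projectivization.card F W).symm

end Submodule

open Module in
theorem Module.Basis.sumExtend_inl {K V ι : Type*} [DivisionRing K] [AddCommGroup V]
    [Module K V] {v : ι → V} (hv : LinearIndependent K v) (i : ι) :
    Basis.sumExtend hv (Sum.inl i) = v i := by
  simp [Basis.sumExtend]; rfl

open Module in
theorem LinearIndependent.exists_linearEquiv_comp_eq {K V ι : Type*} [DivisionRing K]
    [AddCommGroup V] [Module K V] [FiniteDimensional K V] {v w : ι → V}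
    (hv : LinearIndependent K v) (hw : LinearIndependent K w) :
    ∃ e : V ≃ₗ[K] V, e ∘ v = w := by
  let bv := Basis.sumExtend hv
  let bw := Basis.sumExtend hw
  have := Module.Finite.finite_basis bv
  have := Module.Finite.finite_basis bw
  have := Finite.sum_left (α := ι) (Basis.sumExtendIndex hv)
  have := Finite.sum_right ι (β := Basis.sumExtendIndex hv)
  have := Finite.sum_right ι (β := Basis.sumExtendIndex hw)
  have hcard : Nat.card (Basis.sumExtendIndex hv) = Nat.card (Basis.sumExtendIndex hw) := by
    have := (finrank_eq_nat_card_basis bv).symm.trans (finrank_eq_nat_card_basis bw)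
    rwa [Nat.card_sum, Nat.card_sum, Nat.add_left_cancel_iff] at this
  obtain ⟨f⟩ := Finite.card_eq.1 hcard
  let e := (Equiv.refl ι).sumCongr f
  refine ⟨bv.equiv bw e, funext fun i => ?_⟩
  simpa [bv, bw, e, Basis.sumExtend_inl] using bv.equiv_apply (Sum.inl i) bw e

namespace Matrix

theorem eq_diagonal_diag_of_commute {n R : Type*} [Fintype n] [DecidableEq n] [CommRing R]
    [NoZeroDivisors R] {Q : Matrix n n R} {d : n → R} (hd : Injective d)
    (h : Commute Q (diagonal d)) : Q = diagonal Q.diag := by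
  ext i j
  rcases eq_or_ne i j with rfl | hij
  · simp
  · have hij' := congrFun (congrFun h.eq i) j
    rw [mul_diagonal, diagonal_mul] at hij'
    have : (d j - d i) * Q i j = 0 := by linear_combination hij'
    simpa [hij] using (mul_eq_zero.1 this).resolve_left (sub_ne_zero.2 (hd.ne hij.symm))

end Matrix

namespace Matrix.GeneralLinearGroup
variable {n ι R K : Type*} [Fintype n] [DecidableEq n] [CommRing R] [Field K]

theorem exists_smul_eq_linearEquiv (e : (n → R) ≃ₗ[R] (n → R)) :
    ∃ g : GL n R, ∀ v, g • v = e v :=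
  ⟨toLin.symm ((LinearMap.GeneralLinearGroup.generalLinearEquiv R _).symm e), fun v => by
    rw [Units.smul_def, Matrix.smul_eq_mulVec, ← mulVecLin_apply, ← coe_toLin,
      MulEquiv.apply_symm_apply, ← LinearMap.GeneralLinearGroup.coeFn_generalLinearEquiv,
      MulEquiv.apply_symm_apply]⟩

variable (n R) in
def diagonal : (n → Rˣ) →* GL n R where
  toFun d := ⟨Matrix.diagonal fun i => d i, Matrix.diagonal fun i => ↑(d i)⁻¹, by simp, by simp⟩
  map_one' := Units.ext diagonal_one
  map_mul' d d' := Units.ext (diagonal_mul_diagonal _ _).symm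

theorem coe_diagonal (d : n → Rˣ) :
    (diagonal n R d : Matrix n n R) = Matrix.diagonal fun i => (d i : R) := rfl

theorem diagonal_injective : Injective (diagonal n R) := fun d d' h =>
  funext fun i => Units.ext <| by simpa [coe_diagonal] using congrArg (fun g : GL n R => g i i) h

theorem diagonal_smul_single (d : n → Rˣ) (i : n) :
    diagonal n R d • Pi.single i (1 : R) = (d i : R) • Pi.single i 1 := by
  rw [Units.smul_def, Matrix.smul_eq_mulVec, coe_diagonal, diagonal_mulVec_single, mul_one,
    ← Pi.single_smul, smul_eq_mul, mul_one]

theorem commute_diagonal_iff {d : n → Kˣ} (hd : Injective d) (Q : GL n K) :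
    Commute Q (diagonal n K d) ↔ Q ∈ Set.range (diagonal n K) := by
  constructor
  · intro h
    have hQ : (Q : Matrix n n K) = Matrix.diagonal (Q : Matrix n n K).diag :=
      eq_diagonal_diag_of_commute (Units.val_injective.comp hd) h.units_val
    have hdet := Q.det_ne_zero
    rw [hQ, det_diagonal, prod_ne_zero_iff] at hdet
    exact ⟨fun i => Units.mk0 _ (hdet i (mem_univ i)), Units.ext hQ.symm⟩
  · rintro ⟨u, rfl⟩
    exact (Commute.all u d).map (diagonal n K)

theorem card_stabilizer_conjAct_diagonal {d : n → Kˣ} (hd : Injective d) :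
    Nat.card (stabilizer (ConjAct (GL n K)) (diagonal n K d)) = Nat.card (n → Kˣ) := by
  rw [← Nat.card_range_of_injective diagonal_injective]
  refine Nat.card_congr (ConjAct.ofConjAct.toEquiv.subtypeEquiv fun c => ?_)
  change _ ↔ ConjAct.ofConjAct c ∈ _
  rw [mem_stabilizer_iff, ConjAct.smul_def, ← commute_diagonal_iff hd, mul_inv_eq_iff_eq_mul]
  rfl

theorem ncard_conj_diagonal_mul {d : n → Kˣ} (hd : Injective d) :
    {S : GL n K | ∃ P : GL n K, (S : Matrix n n K) =
        P * Matrix.diagonal (fun i => (d i : K)) * (P⁻¹ : GL n K)}.ncard * Nat.card (n → Kˣ) =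
      Nat.card (GL n K) := by
  have horbit : {S : GL n K | ∃ P : GL n K, (S : Matrix n n K) =
      P * Matrix.diagonal (fun i => (d i : K)) * (P⁻¹ : GL n K)} =
        orbit (ConjAct (GL n K)) (diagonal n K d) := by
    ext S
    rw [Set.mem_ofPred_eq, ConjAct.mem_orbit_conjAct, isConj_comm, isConj_iff]
    simp only [Units.ext_iff, Units.val_mul, coe_diagonal, eq_comm]
  rw [horbit, ← index_stabilizer, ← card_stabilizer_conjAct_diagonal hd, Subgroup.index_mul_card,
    Nat.card_congr ConjAct.ofConjAct.toEquiv]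

theorem mem_orbit_single_iff_linearIndependent (f : ι ↪ n) (p : ι → n → K) :
    p ∈ orbit (GL n K) (fun i => Pi.single (f i) 1) ↔ LinearIndependent K p := by
  have hx : LinearIndependent K fun i => (Pi.single (f i) 1 : n → K) := by
    simpa [comp_def] using (Pi.basisFun K n).linearIndependent.comp f f.injective
  constructor
  · rintro ⟨g, rfl⟩
    exact hx.map' (mulVecLin (g : Matrix n n K)) (LinearMap.ker_eq_bot.2 (MulAction.injective g))
  · intro hp
    obtain ⟨e, he⟩ := hx.exists_linearEquiv_comp_eq hp
    obtain ⟨g, hg⟩ := exists_smul_eq_linearEquiv e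
    exact ⟨g, funext fun i => (hg _).trans (congrFun he i)⟩

theorem linearIndependent_iff_exists_smul_eq (f : ι ↪ n) {c : ι → Kˣ} (hc : Injective c)
    (p : ι → n → K) :
    LinearIndependent K p ↔ (∀ i, p i ≠ 0) ∧ ∃ T : GL n K, T • p = fun i => (c i : K) • p i := by
  classical
  constructor
  · intro hp
    refine ⟨hp.ne_zero, ?_⟩
    obtain ⟨g, rfl⟩ := (mem_orbit_single_iff_linearIndependent f p).2 hp
    refine ⟨g * diagonal n K (extend f c 1) * g⁻¹, funext fun i => ?_⟩
    change (g * _ * g⁻¹) • g • (Pi.single (f i) 1 : n → K) =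
      (c i : K) • g • (Pi.single (f i) 1 : n → K)
    rw [mul_smul, mul_smul, inv_smul_smul, diagonal_smul_single, f.injective.extend_apply,
      smul_comm]
  · rintro ⟨hp, T, hT⟩
    refine Module.End.eigenvectors_linearIndependent' (mulVecLin (T : Matrix n n K))
      (fun i => (c i : K)) (Units.val_injective.comp hc) p fun i => ?_
    rw [Module.End.hasEigenvector_iff, Module.End.mem_eigenspace_iff]
    exact ⟨congrFun hT i, hp i⟩

theorem sum_prod_card_eigenvectors [Fintype ι] [DecidableEq ι] [Fintype K] [DecidableEq K]
    {c : ι → Kˣ} (hc : Injective c) (h : Fintype.card ι ≤ Fintype.card n) :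
    ∑ T : GL n K, ∏ i, #{v : n → K | v ≠ 0 ∧ T • v = (c i : K) • v} = Fintype.card (GL n K) := by
  obtain ⟨f⟩ := Function.Embedding.nonempty_of_card_le h
  rw [← sum_card_filter_smul_eq_card (fun i => Pi.single (f i) 1) (fun p => ∀ i, p i ≠ 0)
    (fun p i => (c i : K) • p i) fun p => by
      rw [mem_orbit_single_iff_linearIndependent, linearIndependent_iff_exists_smul_eq f hc]]
  refine sum_congr rfl fun T _ => ?_
  rw [← Fintype.card_piFinset]
  congr 1
  ext p
  simp [funext_iff, forall_and]

end Matrix.GeneralLinearGroup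

theorem eigenLineCount_mul_card_sub_one {F : Type} [Field F] [Fintype F] [DecidableEq F] {n : ℕ}
    (a : F) (T : GL (Fin n) F) :
    eigenLineCount F a T * (Fintype.card F - 1) = #{v : Fin n → F | v ≠ 0 ∧ T • v = a • v} := by
  let W := Module.End.eigenspace (mulVecLin (T : Matrix (Fin n) (Fin n) F)) a
  have hlines : {L : Submodule F (Fin n → F) | Module.finrank F L = 1 ∧
      ∀ v ∈ L, (T : Matrix (Fin n) (Fin n) F) *ᵥ v = a • v} =
        {L : Submodule F (Fin n → F) | Module.finrank F L = 1 ∧ L ≤ W} := by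
    ext L
    simp [W, SetLike.le_def]
  have hvecs : (W : Set (Fin n → F)) \ {0} =
      ↑({v | v ≠ 0 ∧ T • v = a • v} : Finset (Fin n → F)) := by
    ext v
    simp [W, Units.smul_def, and_comm]
  rw [eigenLineCount, hlines, ← Nat.card_eq_fintype_card, Submodule.ncard_finrank_eq_one_le_mul,
    hvecs, Set.ncard_coe_finset]

theorem div_eq_one_div_sub_one_sq {a b q : ℕ} (h : a * (q - 1) ^ 2 = b) (hb : b ≠ 0) :
    (a : ℚ) / b = 1 / ((q : ℚ) - 1) ^ 2 := by
  have hq : 1 ≤ q := by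
    by_contra! hq
    simp_all
  have hcast : (a : ℚ) * ((q : ℚ) - 1) ^ 2 = b := by
    rw [← h]
    push_cast [hq]
    rfl
  have hb' : (a : ℚ) * ((q : ℚ) - 1) ^ 2 ≠ 0 := hcast ▸ Nat.cast_ne_zero.2 hb
  rw [← hcast, div_mul_cancel_left₀ (left_ne_zero_of_mul hb'), one_div]

/-- For `λ ≠ μ ∈ Fˣ` and `n ≥ 2`, the expectation over uniform `T ∈ GL n F` of
`X_{(λ)}(T)·X_{(μ)}(T)` equals `|D|/|GL 2 F|` where `D` is the conjugacy class of
`diag(λ,μ)` in `GL 2 F`, and explicitly equals `1/(q-1)²` with `q = |F|`. -/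
theorem stmt18 (F : Type) [Field F] [Fintype F] [DecidableEq F] (n : ℕ) (hn : 2 ≤ n)
    (lam mu : Fˣ) (hlm : lam ≠ mu) :
    (∑ T : GL (Fin n) F,
        ((eigenLineCount F (lam : F) T * eigenLineCount F (mu : F) T : ℕ) : ℚ))
      / (Fintype.card (GL (Fin n) F) : ℚ)
    = (Set.ncard {S : GL (Fin 2) F | ∃ P : GL (Fin 2) F,
          (S : Matrix (Fin 2) (Fin 2) F)
            = (P : Matrix (Fin 2) (Fin 2) F) * Matrix.diagonal ![(lam : F), (mu : F)]
              * (P⁻¹ : GL (Fin 2) F)} : ℚ)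
        / (Fintype.card (GL (Fin 2) F) : ℚ) ∧
    (∑ T : GL (Fin n) F,
        ((eigenLineCount F (lam : F) T * eigenLineCount F (mu : F) T : ℕ) : ℚ))
      / (Fintype.card (GL (Fin n) F) : ℚ)
    = 1 / ((Fintype.card F : ℚ) - 1) ^ 2 := by
  have hc : Injective ![lam, mu] := by
    intro i j h
    fin_cases i <;> fin_cases j <;> simp_all [eq_comm]
  have hpairs : (∑ T : GL (Fin n) F, eigenLineCount F (lam : F) T * eigenLineCount F (mu : F) T) *
      (Fintype.card F - 1) ^ 2 = Fintype.card (GL (Fin n) F) := by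
    rw [← GeneralLinearGroup.sum_prod_card_eigenvectors hc (by simpa using hn), sum_mul]
    refine sum_congr rfl fun T _ => ?_
    rw [Fin.prod_univ_two, ← eigenLineCount_mul_card_sub_one, ← eigenLineCount_mul_card_sub_one]
    simp only [Matrix.cons_val_zero, Matrix.cons_val_one]
    ring
  have hclass := GeneralLinearGroup.ncard_conj_diagonal_mul (K := F) hc
  have hdiag : (fun i => ((![lam, mu] i : Fˣ) : F)) = ![(lam : F), (mu : F)] := by
    ext i; fin_cases i <;> rfl
  rw [hdiag, Nat.card_fun, Nat.card_units, Nat.card_eq_fintype_card, Nat.card_eq_fintype_card,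
    Nat.card_eq_fintype_card, Fintype.card_fin] at hclass
  have hmain := div_eq_one_div_sub_one_sq hpairs Fintype.card_ne_zero
  rw [Nat.cast_sum] at hmain
  exact ⟨hmain.trans (div_eq_one_div_sub_one_sq hclass Fintype.card_ne_zero).symm, hmain⟩
end
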